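/- The operator-state correspondence intertwines left and right multiplication with the Pauli strings of the defining representation: for every x ∈ 𝒜(A) and every k = 1,…,M, φ(h_k · x) = L_k φ(x) and φ(x · h_k) = R_k φ(x). -/

import Mathlib

noncomputable section


/-- The defining relations of the graph-Clifford algebra associated to a symmetric
0/1 matrix `A` with zero diagonal. -/
inductive GCRel {M : ℕ} (A : Matrix (Fin M) (Fin M) ℤ) :
    FreeAlgebra ℂ (Fin M) → FreeAlgebra ℂ (Fin M) → Prop
  | sq (k : Fin M) : GCRel A (FreeAlgebra.ι ℂ k * FreeAlgebra.ι ℂ k) 1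
  | comm (j k : Fin M) (hjk : j ≠ k) :
      GCRel A (FreeAlgebra.ι ℂ j * FreeAlgebra.ι ℂ k)
        (((-1 : ℂ) ^ (A j k)) • (FreeAlgebra.ι ℂ k * FreeAlgebra.ι ℂ j))

/-- The graph-Clifford algebra `𝒜(A)`. -/
abbrev GC {M : ℕ} (A : Matrix (Fin M) (Fin M) ℤ) := RingQuot (GCRel A)

/-- The generator `h_k` of the graph-Clifford algebra. -/
def hgen {M : ℕ} (A : Matrix (Fin M) (Fin M) ℤ) (k : Fin M) : GC A :=
  RingQuot.mkAlgHom ℂ (GCRel A) (FreeAlgebra.ι ℂ k)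

/-- The ordered product `g_S = h_{a_1} h_{a_2} ⋯ h_{a_n}` for a subset
`S = {a_1 < a_2 < ⋯ < a_n}` (with `g_∅ = 1`). -/
def gS {M : ℕ} (A : Matrix (Fin M) (Fin M) ℤ) (S : Finset (Fin M)) : GC A :=
  ((S.sort (· ≤ ·)).map (hgen A)).prod
/-- The Pauli `X` operator acting on the `a`-th qubit of the `M`-qubit chain,
as a matrix in the computational basis indexed by bit strings `Fin M → Bool`. -/
def Xop {M : ℕ} (a : Fin M) : Matrix (Fin M → Bool) (Fin M → Bool) ℂ :=
  fun s t => if s = Function.update t a (!(t a)) then 1 else 0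

/-- The product `∏_{j ∈ T} Z_j` of Pauli `Z` operators over the sites in `T`
(a diagonal matrix in the computational basis). -/
def Zstring {M : ℕ} (T : Finset (Fin M)) : Matrix (Fin M → Bool) (Fin M → Bool) ℂ :=
  Matrix.diagonal (fun s => ∏ j ∈ T, (if s j then (-1 : ℂ) else 1))

/-- The left defining-representation Pauli string
`L_k = X_k · ∏_{j<k, A_{jk}=1} Z_j`. -/
def Lop {M : ℕ} (A : Matrix (Fin M) (Fin M) ℤ) (k : Fin M) :
    Matrix (Fin M → Bool) (Fin M → Bool) ℂ :=
  Xop k * Zstring (Finset.univ.filter (fun j => j < k ∧ A j k = 1))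

/-- The right defining-representation Pauli string
`R_k = X_k · ∏_{j>k, A_{jk}=1} Z_j`. -/
def Rop {M : ℕ} (A : Matrix (Fin M) (Fin M) ℤ) (k : Fin M) :
    Matrix (Fin M → Bool) (Fin M → Bool) ℂ :=
  Xop k * Zstring (Finset.univ.filter (fun j => k < j ∧ A j k = 1))

/-- The computational basis state `|s⟩` with `s_i = 1` iff `i ∈ S`,
i.e. the image of the basis element `g_S` under the operator-state correspondence. -/
def stateOf {M : ℕ} (S : Finset (Fin M)) : (Fin M → Bool) → ℂ :=
  fun s => if s = (fun i => decide (i ∈ S)) then 1 else 0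

section Aux

variable {M : ℕ} (A : Matrix (Fin M) (Fin M) ℤ)

lemma hgen_sq (k : Fin M) : hgen A k * hgen A k = 1 := by
  rw [hgen, ← map_mul, ← map_one (RingQuot.mkAlgHom ℂ (GCRel A))]
  exact RingQuot.mkAlgHom_rel ℂ (GCRel.sq k)

lemma hgen_comm {j k : Fin M} (h : j ≠ k) :
    hgen A j * hgen A k = ((-1 : ℂ) ^ (A j k)) • (hgen A k * hgen A j) := by
  rw [hgen, hgen, ← map_mul, RingQuot.mkAlgHom_rel ℂ (GCRel.comm j k h)]
  rw [map_smul, map_mul]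

lemma sort_insert_max {a : Fin M} {s : Finset (Fin M)} (h : ∀ b ∈ s, b < a) (ha : a ∉ s) :
    (insert a s).sort (· ≤ ·) = s.sort (· ≤ ·) ++ [a] := by
  refine (fun hp hs => List.Perm.eq_of_pairwise' (Finset.pairwise_sort _ _) hs hp) ?_ ?_
  · refine ((Finset.sort_perm_toList _ _).trans ?_).trans
      ((List.perm_append_singleton _ _).symm.trans
        (((Finset.sort_perm_toList (r := (· ≤ ·)) (s := s)).symm).append_right _))
    exact Finset.toList_insert ha
  · rw [List.pairwise_append]
    refine ⟨Finset.pairwise_sort _ _, List.pairwise_singleton _ _, ?_⟩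
    intro b hb c hc
    rw [List.mem_singleton] at hc
    subst hc
    exact (h b ((Finset.mem_sort _).1 hb)).le

lemma gS_empty : gS A ∅ = 1 := by simp [gS]

lemma gS_singleton (k : Fin M) : gS A {k} = hgen A k := by
  simp [gS, Finset.sort_singleton]

lemma gS_insert_min {a : Fin M} {S : Finset (Fin M)} (h : ∀ b ∈ S, a < b) (ha : a ∉ S) :
    gS A (insert a S) = hgen A a * gS A S := by
  rw [gS, Finset.sort_insert (· ≤ ·) (fun b hb => (h b hb).le) ha, List.map_cons,
    List.prod_cons]
  rfl

lemma gS_insert_max {a : Fin M} {S : Finset (Fin M)} (h : ∀ b ∈ S, b < a) (ha : a ∉ S) :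
    gS A (insert a S) = gS A S * hgen A a := by
  rw [gS, sort_insert_max h ha, List.map_append, List.prod_append]
  simp [gS]

lemma symmDiff_not_mem {k : Fin M} {S : Finset (Fin M)} (h : k ∉ S) :
    symmDiff S {k} = insert k S := by
  ext i
  by_cases hi : i = k <;>
    simp [Finset.mem_symmDiff, hi, h, Finset.mem_insert]

lemma symmDiff_insert_self {a : Fin M} {S : Finset (Fin M)} (h : a ∉ S) :
    symmDiff (insert a S) {a} = S := by
  ext i
  by_cases hi : i = a <;>
    simp [Finset.mem_symmDiff, hi, h, Finset.mem_insert]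

lemma symmDiff_insert_of_ne {a k : Fin M} {S : Finset (Fin M)} (hak : a ≠ k) :
    symmDiff (insert a S) {k} = insert a (symmDiff S {k}) := by
  ext i
  by_cases hi : i = a <;>
    simp [Finset.mem_symmDiff, hi, hak, Finset.mem_insert]

lemma not_mem_symmDiff {a k : Fin M} {S : Finset (Fin M)} (hak : a ≠ k) (ha : a ∉ S) :
    a ∉ symmDiff S {k} := by
  simp [Finset.mem_symmDiff, ha, hak]

lemma left_mul (hsym : A.IsSymm) (S : Finset (Fin M)) (k : Fin M) :
    hgen A k * gS A S =
      (∏ j ∈ S.filter (fun j => j < k), ((-1 : ℂ) ^ (A j k))) • gS A (symmDiff S {k}) := by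
  classical
  induction S using Finset.induction_on_min with
  | empty =>
      rw [gS_empty, mul_one]
      have : symmDiff (∅ : Finset (Fin M)) {k} = insert k ∅ :=
        symmDiff_not_mem (by simp)
      simp [this, gS_singleton]
  | insert a S hmin ih =>
      have ha : a ∉ S := fun h => lt_irrefl a (hmin a h)
      rcases lt_trichotomy k a with hka | rfl | hak
      · -- k < a : k is a new minimum
        have hfil : (insert a S).filter (fun j => j < k) = ∅ := by
          apply Finset.filter_eq_empty_iff.2
          intro j hj
          rcases Finset.mem_insert.1 hj with rfl | hj
          · exact not_lt.2 hka.le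
          · exact not_lt.2 (hka.trans (hmin j hj)).le
        have hknotmem : k ∉ insert a S := by
          intro h
          rcases Finset.mem_insert.1 h with rfl | h
          · exact lt_irrefl k hka
          · exact lt_irrefl k (hka.trans (hmin k h))
        rw [hfil, Finset.prod_empty, one_smul, symmDiff_not_mem hknotmem,
          gS_insert_min A (fun b hb => by
            rcases Finset.mem_insert.1 hb with rfl | hb
            · exact hka
            · exact hka.trans (hmin b hb)) hknotmem]
      · -- k = a
        have hfil : (insert k S).filter (fun j => j < k) = ∅ := by
          apply Finset.filter_eq_empty_iff.2
          intro j hj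
          rcases Finset.mem_insert.1 hj with rfl | hj
          · exact lt_irrefl _
          · exact not_lt.2 (hmin j hj).le
        rw [hfil, Finset.prod_empty, one_smul, symmDiff_insert_self ha,
          gS_insert_min A hmin ha, ← mul_assoc, hgen_sq, one_mul]
      · -- a < k
        have hak' : (a : Fin M) ≠ k := ne_of_lt hak
        have hfil : (insert a S).filter (fun j => j < k)
            = insert a (S.filter (fun j => j < k)) := by
          rw [Finset.filter_insert, if_pos hak]
        have hanotfil : a ∉ S.filter (fun j => j < k) := fun h =>
          ha (Finset.mem_filter.1 h).1
        have hbound : ∀ b ∈ symmDiff S {k}, a < b := by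
          intro b hb
          rcases Finset.mem_symmDiff.1 hb with ⟨hb, _⟩ | ⟨hb, _⟩
          · exact hmin b hb
          · rw [Finset.mem_singleton] at hb; subst hb; exact hak
        rw [gS_insert_min A hmin ha, ← mul_assoc, hgen_comm A (Ne.symm hak'),
          smul_mul_assoc, mul_assoc, ih, mul_smul_comm, smul_smul,
          ← gS_insert_min A hbound (not_mem_symmDiff hak' ha),
          ← symmDiff_insert_of_ne hak', hfil, Finset.prod_insert hanotfil,
          hsym.apply k a]

lemma right_mul (S : Finset (Fin M)) (k : Fin M) :
    gS A S * hgen A k =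
      (∏ j ∈ S.filter (fun j => k < j), ((-1 : ℂ) ^ (A j k))) • gS A (symmDiff S {k}) := by
  classical
  induction S using Finset.induction_on_max with
  | empty =>
      rw [gS_empty, one_mul]
      have : symmDiff (∅ : Finset (Fin M)) {k} = insert k ∅ :=
        symmDiff_not_mem (by simp)
      simp [this, gS_singleton]
  | insert a S hmax ih =>
      have ha : a ∉ S := fun h => lt_irrefl a (hmax a h)
      rcases lt_trichotomy a k with hak | rfl | hka
      · -- a < k : k is a new maximum
        have hfil : (insert a S).filter (fun j => k < j) = ∅ := by
          apply Finset.filter_eq_empty_iff.2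
          intro j hj
          rcases Finset.mem_insert.1 hj with rfl | hj
          · exact not_lt.2 hak.le
          · exact not_lt.2 ((hmax j hj).trans hak).le
        have hknotmem : k ∉ insert a S := by
          intro h
          rcases Finset.mem_insert.1 h with rfl | h
          · exact lt_irrefl k hak
          · exact lt_irrefl k ((hmax k h).trans hak)
        rw [hfil, Finset.prod_empty, one_smul, symmDiff_not_mem hknotmem,
          gS_insert_max A (fun b hb => by
            rcases Finset.mem_insert.1 hb with rfl | hb
            · exact hak
            · exact (hmax b hb).trans hak) hknotmem]
      · -- k = a
        have hfil : (insert a S).filter (fun j => a < j) = ∅ := by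
          apply Finset.filter_eq_empty_iff.2
          intro j hj
          rcases Finset.mem_insert.1 hj with rfl | hj
          · exact lt_irrefl _
          · exact not_lt.2 (hmax j hj).le
        rw [hfil, Finset.prod_empty, one_smul, symmDiff_insert_self ha,
          gS_insert_max A hmax ha, mul_assoc, hgen_sq, mul_one]
      · -- k < a
        have hak' : (a : Fin M) ≠ k := ne_of_gt hka
        have hfil : (insert a S).filter (fun j => k < j)
            = insert a (S.filter (fun j => k < j)) := by
          rw [Finset.filter_insert, if_pos hka]
        have hanotfil : a ∉ S.filter (fun j => k < j) := fun h =>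
          ha (Finset.mem_filter.1 h).1
        have hbound : ∀ b ∈ symmDiff S {k}, b < a := by
          intro b hb
          rcases Finset.mem_symmDiff.1 hb with ⟨hb, _⟩ | ⟨hb, _⟩
          · exact hmax b hb
          · rw [Finset.mem_singleton] at hb; subst hb; exact hka
        rw [gS_insert_max A hmax ha, mul_assoc, hgen_comm A hak',
          mul_smul_comm, ← mul_assoc, ih, smul_mul_assoc, smul_smul,
          ← gS_insert_max A hbound (not_mem_symmDiff hak' ha),
          ← symmDiff_insert_of_ne hak', hfil, Finset.prod_insert hanotfil]

lemma span_top : Submodule.span ℂ (Set.range (gS A)) = ⊤ := by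
  classical
  rw [eq_top_iff]
  rintro x -
  obtain ⟨y, rfl⟩ := RingQuot.mkAlgHom_surjective ℂ (GCRel A) x
  set W := Submodule.span ℂ (Set.range (gS A)) with hWdef
  have h1 : (1 : GC A) ∈ W := by
    rw [← gS_empty A]; exact Submodule.subset_span ⟨∅, rfl⟩
  have hW' : ∀ u ∈ W, ∀ k, u * hgen A k ∈ W := by
    intro u hu k
    have hmap : W.map (LinearMap.mulRight ℂ (hgen A k)) ≤ W := by
      rw [hWdef, Submodule.map_span, Submodule.span_le]
      rintro _ ⟨_, ⟨T, rfl⟩, rfl⟩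
      simp only [LinearMap.mulRight_apply]
      rw [right_mul]
      exact Submodule.smul_mem _ _ (Submodule.subset_span ⟨_, rfl⟩)
    exact hmap ⟨u, hu, rfl⟩
  have hlist : ∀ (l : List (Fin M)), ∀ u ∈ W, u * (l.map (hgen A)).prod ∈ W := by
    intro l
    induction l with
    | nil => intro u hu; simpa using hu
    | cons a l ih =>
        intro u hu
        rw [List.map_cons, List.prod_cons, ← mul_assoc]
        exact ih _ (hW' u hu a)
  have hmul : ∀ u ∈ W, ∀ v ∈ W, u * v ∈ W := by
    intro u hu v hv
    have hmap : W.map (LinearMap.mulLeft ℂ u) ≤ W := by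
      rw [hWdef, Submodule.map_span, Submodule.span_le]
      rintro _ ⟨_, ⟨T, rfl⟩, rfl⟩
      simp only [LinearMap.mulLeft_apply]
      exact hlist _ u hu
    exact hmap ⟨v, hv, rfl⟩
  induction y using FreeAlgebra.induction with
  | grade0 r =>
      rw [AlgHom.commutes, Algebra.algebraMap_eq_smul_one]
      exact W.smul_mem r h1
  | grade1 k =>
      rw [show (RingQuot.mkAlgHom ℂ (GCRel A)) (FreeAlgebra.ι ℂ k) = hgen A k from rfl,
        ← gS_singleton A k]
      exact Submodule.subset_span ⟨{k}, rfl⟩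
  | mul a b hb hc => rw [map_mul]; exact hmul _ hb _ hc
  | add a b hb hc => rw [map_add]; exact W.add_mem hb hc

lemma flip_indicator (S : Finset (Fin M)) (k : Fin M) :
    Function.update (fun i => decide (i ∈ S)) k (!(decide (k ∈ S)))
      = fun i => decide (i ∈ symmDiff S {k}) := by
  funext i
  by_cases hi : i = k
  · subst hi
    simp [Function.update_self, Finset.mem_symmDiff]
  · simp [Function.update_of_ne hi, Finset.mem_symmDiff, hi]

lemma XZ_mulVec (k : Fin M) (T : Finset (Fin M)) (S : Finset (Fin M)) :
    (Xop k * Zstring T).mulVec (stateOf S) =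
      (∏ j ∈ T, (if j ∈ S then (-1 : ℂ) else 1)) • stateOf (symmDiff S {k}) := by
  classical
  funext s
  set sS : Fin M → Bool := fun i => decide (i ∈ S) with hsS
  have hd : (∏ j ∈ T, (if sS j then (-1 : ℂ) else 1))
      = ∏ j ∈ T, (if j ∈ S then (-1 : ℂ) else 1) := by
    refine Finset.prod_congr rfl fun j _ => ?_
    simp [hsS]
  have h1 : (Xop k * Zstring T).mulVec (stateOf S) s = (Xop k * Zstring T) s sS := by
    simp only [Matrix.mulVec, dotProduct, stateOf, ← hsS, mul_ite, mul_one, mul_zero]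
    rw [Finset.sum_ite_eq' Finset.univ sS]
    simp
  have h2 : (Xop k * Zstring T) s sS
      = Xop k s sS * ∏ j ∈ T, (if sS j then (-1 : ℂ) else 1) := by
    rw [Matrix.mul_apply]
    simp only [Zstring, Matrix.diagonal_apply, mul_ite, mul_zero]
    rw [Finset.sum_ite_eq' Finset.univ sS]
    simp
  rw [h1, h2, hd]
  have hflip : Function.update sS k (!(sS k)) = fun i => decide (i ∈ symmDiff S {k}) :=
    flip_indicator S k
  simp only [Xop, hflip, stateOf, Pi.smul_apply, smul_eq_mul]
  by_cases hs : s = fun i => decide (i ∈ symmDiff S {k}) <;> simp [hs, mul_comm]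

lemma prod_sign_eq (h01 : ∀ j k, A j k = 0 ∨ A j k = 1) (S : Finset (Fin M)) (k : Fin M)
    (p : Fin M → Prop) [DecidablePred p] :
    (∏ j ∈ Finset.univ.filter (fun j => p j ∧ A j k = 1), (if j ∈ S then (-1 : ℂ) else 1))
      = ∏ j ∈ S.filter p, ((-1 : ℂ) ^ (A j k)) := by
  classical
  have hsets : (Finset.univ.filter (fun j => p j ∧ A j k = 1)).filter (· ∈ S)
      = (S.filter p).filter (fun j => A j k = 1) := by
    ext j
    simp only [Finset.mem_filter, Finset.mem_univ, true_and]
    tauto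
  calc (∏ j ∈ Finset.univ.filter (fun j => p j ∧ A j k = 1),
          (if j ∈ S then (-1 : ℂ) else 1))
      = ∏ j ∈ (Finset.univ.filter (fun j => p j ∧ A j k = 1)).filter (· ∈ S), (-1 : ℂ) :=
        (Finset.prod_filter _ _).symm
    _ = ∏ j ∈ (S.filter p).filter (fun j => A j k = 1), (-1 : ℂ) := by rw [hsets]
    _ = ∏ j ∈ S.filter p, (if A j k = 1 then (-1 : ℂ) else 1) := Finset.prod_filter _ _
    _ = ∏ j ∈ S.filter p, ((-1 : ℂ) ^ (A j k)) := by
        refine Finset.prod_congr rfl fun j _ => ?_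
        rcases h01 j k with h | h <;> simp [h]

lemma Lop_mulVec (h01 : ∀ j k, A j k = 0 ∨ A j k = 1) (S : Finset (Fin M)) (k : Fin M) :
    (Lop A k).mulVec (stateOf S) =
      (∏ j ∈ S.filter (fun j => j < k), ((-1 : ℂ) ^ (A j k))) • stateOf (symmDiff S {k}) := by
  rw [Lop, XZ_mulVec, prod_sign_eq A h01 S k (fun j => j < k)]

lemma Rop_mulVec (h01 : ∀ j k, A j k = 0 ∨ A j k = 1) (S : Finset (Fin M)) (k : Fin M) :
    (Rop A k).mulVec (stateOf S) =
      (∏ j ∈ S.filter (fun j => k < j), ((-1 : ℂ) ^ (A j k))) • stateOf (symmDiff S {k}) := by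
  rw [Rop, XZ_mulVec, prod_sign_eq A h01 S k (fun j => k < j)]

end Aux

/-- any linear operator-state correspondence `φ` (the linear map sending
each basis element `g_S` to the computational basis state `|s⟩` with `s_i = 1` iff
`i ∈ S`) intertwines left multiplication by `h_k` with `L_k` and right multiplication
by `h_k` with `R_k`. -/
theorem stmt4 (M : ℕ) (hM : 1 ≤ M) (A : Matrix (Fin M) (Fin M) ℤ)
    (hsym : A.IsSymm) (h01 : ∀ j k, A j k = 0 ∨ A j k = 1) (hdiag : ∀ j, A j j = 0)
    (φ : GC A →ₗ[ℂ] ((Fin M → Bool) → ℂ))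
    (hφ : ∀ S : Finset (Fin M), φ (gS A S) = stateOf S) :
    ∀ (x : GC A) (k : Fin M),
      φ (hgen A k * x) = (Lop A k).mulVec (φ x) ∧
      φ (x * hgen A k) = (Rop A k).mulVec (φ x) := by
  classical
  have hspan := span_top A
  intro x k
  constructor
  · have hL : (φ.comp (LinearMap.mulLeft ℂ (hgen A k)))
        = (Matrix.mulVecLin (Lop A k)).comp φ := by
      apply LinearMap.ext_on hspan
      rintro _ ⟨S, rfl⟩
      simp only [LinearMap.comp_apply, LinearMap.mulLeft_apply, Matrix.mulVecLin_apply]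
      rw [left_mul A hsym S k, map_smul, hφ, hφ, Lop_mulVec A h01 S k]
    have := LinearMap.congr_fun hL x
    simpa using this
  · have hR : (φ.comp (LinearMap.mulRight ℂ (hgen A k)))
        = (Matrix.mulVecLin (Rop A k)).comp φ := by
      apply LinearMap.ext_on hspan
      rintro _ ⟨S, rfl⟩
      simp only [LinearMap.comp_apply, LinearMap.mulRight_apply, Matrix.mulVecLin_apply]
      rw [right_mul A S k, map_smul, hφ, hφ, Rop_mulVec A h01 S k]
    have := LinearMap.congr_fun hR x
    simpa using this

end
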